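/- arXiv:2304.10272 — 2 statements merged into one kernel-verified Lean document; each statement's English description precedes it below -/
import Mathlib

section
/- For every δ > 0 and integers n, m ≥ 1 there exists a constant c = c(n, m, δ) > 0 with the following property: for every linear map φ : ℝⁿ → ℝᵐ and every Lebesgue measurable set S ⊆ B₁ⁿ(0) with ℒⁿ(S) ≥ δ, one has ∫_S |φ(x)|² dx ≥ c · ‖φ‖²_{op}. -/
/-!
In finite dimensions `φ` attains its norm at some `v` with `‖v‖ ≤ 1`; the Riesz representative
`u` of `x ↦ ⟪φ x, φ v⟫ / ‖φ‖` satisfies `‖φ‖ ≤ ‖u‖` and `|⟪x, u⟫| ≤ ‖φ x‖`. A reflection taking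
`u` to a coordinate direction puts the slab `{x ∈ B₁ | |⟪x, u⟫| < t ‖u‖}` inside a box of volume
`2t · 2ⁿ⁻¹`. Taking `t` of order `δ / 2ⁿ`, at least half of the mass `δ` of `S` lies outside the
slab, where `‖φ x‖ ≥ t ‖φ‖`.
-/

open MeasureTheory Metric
open scoped RealInnerProductSpace ENNReal

section Slab

variable {ι : Type*} [Fintype ι]

lemma volume_ball_inter_abs_apply_lt_le (i : ι) (t : ℝ) :
    volume (ball (0 : EuclideanSpace ℝ ι) 1 ∩ {y | |y i| < t})
      ≤ ENNReal.ofReal (2 * t) * 2 ^ (Fintype.card ι - 1) := by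
  classical
  let box : Set (ι → ℝ) :=
    Set.univ.pi (Function.update (fun _ => Set.Ioo (-1) 1) i (Set.Ioo (-t) t))
  have hsub : ball (0 : EuclideanSpace ℝ ι) 1 ∩ {y | |y i| < t}
      ⊆ (MeasurableEquiv.toLp 2 (ι → ℝ)).symm ⁻¹' box := by
    rintro y ⟨hy, hyi⟩ j -
    rw [mem_ball_zero_iff] at hy
    rcases eq_or_ne j i with rfl | hj
    · simpa [abs_lt] using hyi
    · simpa [hj, abs_lt] using (PiLp.norm_apply_le y j).trans_lt hy
  calc _ ≤ volume ((MeasurableEquiv.toLp 2 (ι → ℝ)).symm ⁻¹' box) := measure_mono hsub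
    _ = volume box :=
      (EuclideanSpace.volume_preserving_symm_measurableEquiv_toLp ι).measure_preimage_equiv box
    _ = ENNReal.ofReal (2 * t) * 2 ^ (Fintype.card ι - 1) := by
      rw [volume_pi_pi]
      simp only [Function.apply_update (fun _ => (volume : Measure ℝ)), Real.volume_Ioo]
      rw [Finset.prod_update_of_mem (Finset.mem_univ i), Finset.prod_const,
        Finset.card_sdiff, Finset.card_univ]
      norm_num [two_mul]

lemma volume_ball_inter_abs_inner_lt_le (u : EuclideanSpace ℝ ι) (t : ℝ) :
    volume (ball (0 : EuclideanSpace ℝ ι) 1 ∩ {x | |⟪x, u⟫| < t * ‖u‖})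
      ≤ ENNReal.ofReal (2 * t) * 2 ^ (Fintype.card ι - 1) := by
  classical
  rcases eq_or_ne u 0 with rfl | hu
  · simp
  have hu' : 0 < ‖u‖ := norm_pos_iff.mpr hu
  obtain ⟨i, -⟩ : ∃ i, u i ≠ 0 := by
    by_contra! h
    exact hu (by ext i; simp [h])
  let e : EuclideanSpace ℝ ι := EuclideanSpace.single i ‖u‖
  -- the reflection exchanging `u` and `e` turns the slab into a coordinate slab
  let R := Submodule.reflection (ℝ ∙ (u - e))ᗮ
  have hRu : R u = e := Submodule.reflection_sub (by simp [e])
  have hslab : ball (0 : EuclideanSpace ℝ ι) 1 ∩ {x | |⟪x, u⟫| < t * ‖u‖}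
      = R ⁻¹' (ball 0 1 ∩ {y | |y i| < t}) := by
    ext x
    have hx : ⟪x, u⟫ = R x i * ‖u‖ := by
      rw [← R.inner_map_map, hRu, EuclideanSpace.inner_single_right]
      simp [mul_comm]
    simp [hx, abs_mul, abs_of_pos hu', mul_lt_mul_iff_left₀ hu']
  rw [hslab, R.measurePreserving.measure_preimage
    (isOpen_ball.inter (isOpen_lt (by fun_prop) continuous_const)).measurableSet.nullMeasurableSet]
  exact volume_ball_inter_abs_apply_lt_le i t

end Slab

section Witness

variable {E F : Type*} [NormedAddCommGroup E] [InnerProductSpace ℝ E] [FiniteDimensional ℝ E]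
  [NormedAddCommGroup F] [InnerProductSpace ℝ F]

lemma ContinuousLinearMap.exists_norm_le_one_norm_apply_eq_opNorm {G : Type*}
    [NormedAddCommGroup G] [NormedSpace ℝ G] (φ : E →L[ℝ] G) :
    ∃ v, ‖v‖ ≤ 1 ∧ ‖φ v‖ = ‖φ‖ := by
  obtain ⟨v, hv, hmax⟩ := (isCompact_closedBall (0 : E) 1).exists_isMaxOn
    (nonempty_closedBall.mpr zero_le_one) φ.continuous.norm.continuousOn
  rw [mem_closedBall_zero_iff] at hv
  refine ⟨v, hv, le_antisymm ((φ.le_opNorm_of_le hv).trans_eq (mul_one _)) ?_⟩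
  exact φ.opNorm_le_of_unit_norm (norm_nonneg _) fun x hx =>
    hmax (mem_closedBall_zero_iff.mpr hx.le)

lemma ContinuousLinearMap.exists_opNorm_le_norm_and_abs_inner_le (φ : E →L[ℝ] F) :
    ∃ u : E, ‖φ‖ ≤ ‖u‖ ∧ ∀ x, |⟪x, u⟫| ≤ ‖φ x‖ := by
  rcases (norm_nonneg φ).eq_or_lt with h0 | hpos
  · exact ⟨0, by simp [← h0], fun x => by simp⟩
  obtain ⟨v, hv, hφv⟩ := φ.exists_norm_le_one_norm_apply_eq_opNorm
  let u := (InnerProductSpace.toDual ℝ E).symm (‖φ‖⁻¹ • (innerSL ℝ (φ v)).comp φ)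
  have hu : ∀ x, ⟪x, u⟫ = ⟪φ x, φ v⟫ / ‖φ‖ := fun x => by
    rw [real_inner_comm, InnerProductSpace.toDual_symm_apply]
    simp [real_inner_comm, div_eq_inv_mul]
  refine ⟨u, ?_, fun x => ?_⟩
  · calc ‖φ‖ = ⟪v, u⟫ := by rw [hu, real_inner_self_eq_norm_sq, hφv]; field_simp
      _ ≤ ‖v‖ * ‖u‖ := real_inner_le_norm v u
      _ ≤ ‖u‖ := mul_le_of_le_one_left (norm_nonneg u) hv
  · rw [hu, abs_div, abs_of_pos hpos, div_le_iff₀ hpos, ← hφv]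
    exact abs_real_inner_le_norm _ _

end Witness

lemma sq_mul_le_setIntegral_norm_sq {ι F : Type*} [Fintype ι] [NormedAddCommGroup F]
    [InnerProductSpace ℝ F] (φ : EuclideanSpace ℝ ι →L[ℝ] F) {S : Set (EuclideanSpace ℝ ι)}
    (hS : MeasurableSet S) (hSb : S ⊆ ball 0 1) {t r : ℝ} (ht : 0 ≤ t)
    (hvol : ENNReal.ofReal (2 * t) * 2 ^ (Fintype.card ι - 1) + ENNReal.ofReal r ≤ volume S) :
    (t * ‖φ‖) ^ 2 * r ≤ ∫ x in S, ‖φ x‖ ^ 2 := by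
  obtain ⟨u, hφu, hu⟩ := φ.exists_opNorm_le_norm_and_abs_inner_le
  set B := ball (0 : EuclideanSpace ℝ ι) 1 ∩ {x | |⟪x, u⟫| < t * ‖u‖}
  have hB : MeasurableSet B :=
    (isOpen_ball.inter (isOpen_lt (by fun_prop) continuous_const)).measurableSet
  have hfin : volume (S \ B) ≠ ∞ :=
    ((measure_mono (Set.sdiff_subset.trans hSb)).trans_lt measure_ball_lt_top).ne
  have hint : IntegrableOn (fun x => ‖φ x‖ ^ 2) S :=
    ((φ.continuous.norm.pow 2).continuousOn.integrableOn_compact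
      (isCompact_closedBall 0 1)).mono_set (hSb.trans ball_subset_closedBall)
  have hr : ENNReal.ofReal r ≤ volume (S \ B) :=
    calc ENNReal.ofReal r ≤ volume S - volume B :=
          ENNReal.le_sub_of_add_le_left
            ((measure_mono Set.inter_subset_left).trans_lt measure_ball_lt_top).ne
            ((add_le_add_left (volume_ball_inter_abs_inner_lt_le u t) _).trans hvol)
      _ ≤ volume (S \ B) := le_measure_sdiff
  have hlow : ∀ x ∈ S \ B, (t * ‖φ‖) ^ 2 ≤ ‖φ x‖ ^ 2 := by
    rintro x ⟨hxS, hxB⟩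
    have hx : t * ‖u‖ ≤ |⟪x, u⟫| := not_lt.mp fun h => hxB ⟨hSb hxS, h⟩
    gcongr
    exact (mul_le_mul_of_nonneg_left hφu ht).trans (hx.trans (hu x))
  calc (t * ‖φ‖) ^ 2 * r ≤ (t * ‖φ‖) ^ 2 * volume.real (S \ B) := by
        gcongr
        exact (ENNReal.ofReal_le_iff_le_toReal hfin).mp hr
    _ ≤ ∫ x in S \ B, ‖φ x‖ ^ 2 :=
        setIntegral_ge_of_const_le_real (hS.diff hB) hfin hlow (hint.mono_set Set.sdiff_subset)
    _ ≤ ∫ x in S, ‖φ x‖ ^ 2 :=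
        setIntegral_mono_set hint (ae_of_all _ fun x => sq_nonneg _) Set.sdiff_subset.eventuallyLE

theorem stmt_5_general (n m : ℕ) (δ : ℝ) (hδ : 0 < δ) :
    ∃ c : ℝ, 0 < c ∧
      ∀ (φ : EuclideanSpace ℝ (Fin n) →L[ℝ] EuclideanSpace ℝ (Fin m))
        (S : Set (EuclideanSpace ℝ (Fin n))), MeasurableSet S →
        S ⊆ Metric.ball 0 1 → ENNReal.ofReal δ ≤ MeasureTheory.volume S →
        c * ‖φ‖ ^ 2 ≤ ∫ x in S, ‖φ x‖ ^ 2 := by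
  set t := δ / (4 * 2 ^ (n - 1))
  refine ⟨t ^ 2 * (δ / 2), by positivity, fun φ S hS hSb hvol => ?_⟩
  have hslab : ENNReal.ofReal (2 * t) * 2 ^ (Fintype.card (Fin n) - 1)
      = ENNReal.ofReal (δ / 2) := by
    rw [Fintype.card_fin, ← ENNReal.ofReal_ofNat, ← ENNReal.ofReal_pow zero_le_two,
      ← ENNReal.ofReal_mul (by positivity)]
    congr 1
    simp only [t]
    field_simp
    ring
  have hmass : ENNReal.ofReal (2 * t) * 2 ^ (Fintype.card (Fin n) - 1) + ENNReal.ofReal (δ / 2)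
      ≤ volume S := by
    rwa [hslab, ← ENNReal.ofReal_add (by positivity) (by positivity), add_halves]
  calc t ^ 2 * (δ / 2) * ‖φ‖ ^ 2 = (t * ‖φ‖) ^ 2 * (δ / 2) := by ring
    _ ≤ ∫ x in S, ‖φ x‖ ^ 2 := sq_mul_le_setIntegral_norm_sq φ hS hSb (by positivity) hmass

/-- For every `δ > 0` there is `c = c(n,m,δ) > 0` such that for every linear map
`φ : ℝⁿ → ℝᵐ` and every measurable `S ⊆ B₁ⁿ(0)` with `ℒⁿ(S) ≥ δ`,
`∫_S |φ(x)|² dx ≥ c ‖φ‖²_op`. -/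
theorem stmt_5 (n m : ℕ) (hn : 1 ≤ n) (hm : 1 ≤ m) (δ : ℝ) (hδ : 0 < δ) :
    ∃ c : ℝ, 0 < c ∧
      ∀ (φ : EuclideanSpace ℝ (Fin n) →L[ℝ] EuclideanSpace ℝ (Fin m))
        (S : Set (EuclideanSpace ℝ (Fin n))), MeasurableSet S →
        S ⊆ Metric.ball 0 1 → ENNReal.ofReal δ ≤ MeasureTheory.volume S →
        c * ‖φ‖ ^ 2 ≤ ∫ x in S, ‖φ x‖ ^ 2 :=
  stmt_5_general n m δ hδ
end

section
/- There is a constant C = C(n) ∈ (0, ∞) with the following property. Let m ≥ 1, let w : B̄_{1/2}(0) \ {0} → ℝᵐ be a C¹ function on the punctured closed half-ball in ℝⁿ, and let ψ : ℝⁿ → ℝᵐ be continuous and positively homogeneous of degree 1 (ψ(tx) = t ψ(x) for t > 0). Then ∫_{B_{1/2}(0)} |w − ψ|² ≤ C ∫_{B_{1/4}(0)} |w − ψ|² + C ∫_{B_{1/2}(0) \ B_{1/8}(0)} |∂_R (w/R)|², where R(x) = |x| and ∂_R denotes the radial derivative. -/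
/-!
Write `G = ∂_R(w/R)`. For `1/4 ≤ |x| < 1/2` the fundamental theorem of calculus along the ray,
applied to `t ↦ w(t x)/t` on `[1/2, 1]`, and the homogeneity `ψ(x) = 2 ψ(x/2)` give
`w(x) - ψ(x) = 2 (w(x/2) - ψ(x/2)) + |x|² ∫_{1/2}^1 G(t x) dt`.
Squaring and Cauchy–Schwarz bound `|w - ψ|²(x)` by `8 |w - ψ|²(x/2) + ∫_{1/2}^1 |G(t x)|² dt`.
Integrating over the annulus `B_{1/2} \ B_{1/4}` and rescaling (`x ↦ x/2` and `x ↦ t x`, each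
costing a factor `≤ 2ⁿ`) bounds that part of the left side by the two integrals on the right.
The derivative integral is finite (so its Bochner value is not the junk value `0`) because `w`
is `C¹` up to the sphere of radius `1/2`.
-/

open Metric MeasureTheory Set Filter Module
open scoped ENNReal

theorem ENNReal.add_sq_le (a b : ℝ≥0∞) : (a + b) ^ 2 ≤ 2 * (a ^ 2 + b ^ 2) := by
  have h := ENNReal.rpow_add_le_mul_rpow_add_rpow a b one_le_two
  norm_num at h
  exact_mod_cast h

theorem ENNReal.toReal_le_mul_add_mul {a b c d : ℝ≥0∞} (hc : c ≠ ∞) (hd : d ≠ ∞) (hba : b ≤ a)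
    (h : a ≤ c * b + c * d) : a.toReal ≤ c.toReal * b.toReal + c.toReal * d.toReal := by
  rcases eq_or_ne a ∞ with rfl | ha
  · simp only [ENNReal.toReal_top]; positivity
  have hb : b ≠ ∞ := ne_top_of_le_ne_top ha hba
  rw [← ENNReal.toReal_mul, ← ENNReal.toReal_mul,
    ← ENNReal.toReal_add (by finiteness) (by finiteness)]
  exact ENNReal.toReal_mono (by finiteness) h

theorem setLIntegral_sq_le {α : Type*} [MeasurableSpace α] (μ : Measure α) (s : Set α)
    {g : α → ℝ≥0∞} (hg : AEMeasurable g (μ.restrict s)) :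
    (∫⁻ x in s, g x ∂μ) ^ 2 ≤ μ s * ∫⁻ x in s, g x ^ 2 ∂μ := by
  have h := ENNReal.lintegral_mul_le_Lp_mul_Lq (μ.restrict s) Real.HolderConjugate.two_two
    aemeasurable_const hg (f := fun _ => 1)
  simp only [Pi.mul_apply, one_mul, ENNReal.one_rpow, lintegral_one,
    Measure.restrict_apply_univ] at h
  have hsq : ∀ x : ℝ≥0∞, (x ^ (1 / 2 : ℝ)) ^ 2 = x := fun x => by
    rw [← ENNReal.rpow_natCast, ← ENNReal.rpow_mul]; norm_num
  calc (∫⁻ x in s, g x ∂μ) ^ 2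
      ≤ (μ s ^ (1 / 2 : ℝ) * (∫⁻ x in s, g x ^ (2 : ℝ) ∂μ) ^ (1 / 2 : ℝ)) ^ 2 := by gcongr
    _ = μ s * ∫⁻ x in s, g x ^ 2 ∂μ := by
      rw [mul_pow, hsq, hsq]; simp_rw [← ENNReal.rpow_natCast]; norm_num

section SqNormOn

variable {α F : Type*} [NormedAddCommGroup F]

/-- A measurable stand-in for `‖f‖²` when `f` is only continuous on `U`. -/
noncomputable def sqNormOn (U : Set α) (f : α → F) : α → ℝ≥0∞ :=
  U.indicator fun y => ‖f y‖ₑ ^ 2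

theorem sqNormOn_of_mem {U : Set α} {f : α → F} {x : α} (hx : x ∈ U) :
    sqNormOn U f x = ‖f x‖ₑ ^ 2 :=
  indicator_of_mem hx _

theorem sqNormOn_le (U : Set α) (f : α → F) (x : α) : sqNormOn U f x ≤ ‖f x‖ₑ ^ 2 :=
  indicator_le_self _ _ x

theorem ContinuousOn.measurable_sqNormOn [TopologicalSpace α] [MeasurableSpace α]
    [OpensMeasurableSpace α]
    {U : Set α} {f : α → F} (hf : ContinuousOn f U) (hU : MeasurableSet U) :
    Measurable (sqNormOn U f) := by
  classical
  rw [sqNormOn, ← piecewise_eq_indicator]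
  exact ((ENNReal.continuous_pow 2).comp_continuousOn hf.enorm).measurable_piecewise
    continuousOn_const hU

theorem ContinuousOn.setIntegral_norm_sq_eq_toReal [TopologicalSpace α] [MeasurableSpace α]
    [OpensMeasurableSpace α]
    {μ : Measure α} {s U : Set α} {f : α → F} (hf : ContinuousOn f U) (hs : MeasurableSet s)
    (hU : MeasurableSet U) (hsU : ∀ᵐ x ∂μ, x ∈ s → x ∈ U) :
    ∫ x in s, ‖f x‖ ^ 2 ∂μ = (∫⁻ x in s, sqNormOn U f x ∂μ).toReal := by
  rw [← integral_toReal (hf.measurable_sqNormOn hU).aemeasurable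
    (ae_of_all _ fun x => (sqNormOn_le U f x).trans_lt (by finiteness))]
  refine setIntegral_congr_ae hs (hsU.mono fun x hxU hx => ?_)
  rw [sqNormOn_of_mem (hxU hx), ENNReal.toReal_pow, toReal_enorm]

end SqNormOn

theorem ContinuousOn.inv_norm_sq_smul {E F : Type*} [NormedAddCommGroup E] [NormedAddCommGroup F]
    [NormedSpace ℝ F] {f : E → F} {s : Set E} (hf : ContinuousOn f s) (h0 : (0 : E) ∉ s) :
    ContinuousOn (fun y => (‖y‖ ^ 2)⁻¹ • f y) s :=
  ((continuous_norm.continuousOn.pow 2).inv₀ fun _ hy =>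
    pow_ne_zero 2 (norm_ne_zero_iff.2 (ne_of_mem_of_not_mem hy h0))).smul hf

section RadialDerivative

variable {E F : Type*} [NormedAddCommGroup E] [NormedSpace ℝ E] [NormedAddCommGroup F]
  [NormedSpace ℝ F]

/-- The paper's `∂_R (w/R)` with `R = ‖·‖`, for differentiable `w`:
`d/dt|_{t=‖y‖} w(t y/‖y‖)/t = (Dw(y) y - w(y)) / ‖y‖²`. -/
noncomputable def radialDerivDivNorm (w : E → F) (y : E) : F := (‖y‖ ^ 2)⁻¹ • (fderiv ℝ w y y - w y)

theorem hasDerivAt_inv_smul_comp_smul {w : E → F} {z : E} {u : ℝ}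
    (hw : DifferentiableAt ℝ w (u • z)) (hu : u ≠ 0) (hz : z ≠ 0) :
    HasDerivAt (fun t : ℝ => t⁻¹ • w (t • z)) (‖z‖ ^ 2 • radialDerivDivNorm w (u • z)) u := by
  have hline : HasDerivAt (fun t : ℝ => w (t • z)) (fderiv ℝ w (u • z) z) u :=
    hw.hasFDerivAt.comp_hasDerivAt u ((hasDerivAt_id u).smul_const z |>.congr_deriv (one_smul _ _))
  convert (hasDerivAt_inv hu).fun_smul hline using 1
  have hz' : ‖z‖ ≠ 0 := norm_ne_zero_iff.2 hz
  simp only [radialDerivDivNorm, map_smul, norm_smul, Real.norm_eq_abs, mul_pow, sq_abs]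
  match_scalars <;> field_simp

theorem deriv_inv_smul_comp_smul_inv_norm {w : E → F} {x : E} (hw : DifferentiableAt ℝ w x)
    (hx : x ≠ 0) :
    deriv (fun t : ℝ => t⁻¹ • w (t • (‖x‖⁻¹ • x))) ‖x‖ = radialDerivDivNorm w x := by
  have hx' : ‖x‖ ≠ 0 := norm_ne_zero_iff.2 hx
  have hunit : ‖‖x‖⁻¹ • x‖ = 1 := by rw [norm_smul, norm_inv, norm_norm, inv_mul_cancel₀ hx']
  have h := hasDerivAt_inv_smul_comp_smul (z := ‖x‖⁻¹ • x) (u := ‖x‖)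
    (by rwa [smul_inv_smul₀ hx']) hx' (by rw [← norm_ne_zero_iff, hunit]; exact one_ne_zero)
  rw [h.deriv, hunit, one_pow, one_smul, smul_inv_smul₀ hx']

theorem ContDiffOn.continuousOn_radialDerivDivNorm {w : E → F} {U : Set E}
    (hw : ContDiffOn ℝ 1 w U) (hU : IsOpen U) (h0 : (0 : E) ∉ U) :
    ContinuousOn (radialDerivDivNorm w) U :=
  ((hw.continuousOn_fderiv_of_isOpen hU le_rfl).clm_apply continuousOn_id
    |>.sub hw.continuousOn).inv_norm_sq_smul h0

theorem ContDiffOn.exists_bound_radialDerivDivNorm {w : E → F} {s K : Set E}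
    (hw : ContDiffOn ℝ 1 w s) (hs : UniqueDiffOn ℝ s) (h0 : (0 : E) ∉ s) (hK : IsCompact K)
    (hKs : K ⊆ s) : ∃ M, ∀ y ∈ K ∩ interior s, ‖radialDerivDivNorm w y‖ ≤ M := by
  set g : E → F := fun y => (‖y‖ ^ 2)⁻¹ • (fderivWithin ℝ w s y y - w y)
  have hg : ContinuousOn g s :=
    ((hw.continuousOn_fderivWithin hs le_rfl).clm_apply continuousOn_id
      |>.sub hw.continuousOn).inv_norm_sq_smul h0
  obtain ⟨M, hM⟩ := hK.exists_bound_of_continuousOn (hg.mono hKs)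
  refine ⟨M, fun y ⟨hyK, hys⟩ => ?_⟩
  rw [radialDerivDivNorm, ← fderivWithin_of_mem_nhds (mem_interior_iff_mem_nhds.1 hys)]
  exact hM y hyK

theorem enorm_sub_le_enorm_sub_half_add_lintegral [CompleteSpace F] {w ψ : E → F} {x : E}
    (hx : x ≠ 0) (hψ : ψ x = (2 : ℝ) • ψ ((2 : ℝ)⁻¹ • x))
    (hw : ∀ t ∈ Icc (2⁻¹ : ℝ) 1, DifferentiableAt ℝ w (t • x))
    (hG : ContinuousOn (fun t : ℝ => radialDerivDivNorm w (t • x)) (Icc 2⁻¹ 1)) :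
    ‖w x - ψ x‖ₑ ≤ 2 * ‖w ((2 : ℝ)⁻¹ • x) - ψ ((2 : ℝ)⁻¹ • x)‖ₑ
      + ‖x‖ₑ ^ 2 * ∫⁻ t in Ioc (2⁻¹ : ℝ) 1, ‖radialDerivDivNorm w (t • x)‖ₑ := by
  have hle : (2⁻¹ : ℝ) ≤ 1 := by norm_num
  have hftc := intervalIntegral.integral_eq_sub_of_hasDerivAt
    (f := fun t : ℝ => t⁻¹ • w (t • x)) (a := 2⁻¹) (b := 1)
    (fun t ht => hasDerivAt_inv_smul_comp_smul (hw t (uIcc_of_le hle ▸ ht))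
      (by rw [uIcc_of_le hle] at ht; linarith [ht.1]) hx)
    ((continuousOn_const.smul hG).intervalIntegrable_of_Icc hle)
  simp only [inv_one, one_smul, inv_inv, intervalIntegral.integral_smul] at hftc
  have hsplit : w x - ψ x = (2 : ℝ) • (w ((2 : ℝ)⁻¹ • x) - ψ ((2 : ℝ)⁻¹ • x))
      + ‖x‖ ^ 2 • ∫ t in (2⁻¹ : ℝ)..1, radialDerivDivNorm w (t • x) := by
    rw [hftc, hψ, smul_sub]; abel
  rw [hsplit, intervalIntegral.integral_of_le hle]
  refine (enorm_add_le _ _).trans (add_le_add ?_ ?_)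
  · rw [enorm_smul, Real.enorm_eq_ofReal zero_le_two, ENNReal.ofReal_ofNat]
  · rw [enorm_smul, enorm_pow, enorm_norm]
    gcongr
    exact enorm_integral_le_lintegral_enorm _

theorem enorm_sub_sq_le_enorm_sub_half_sq_add_lintegral [CompleteSpace F] {w ψ : E → F} {x : E}
    (hx : x ≠ 0) (hx₁ : ‖x‖ ≤ 1) (hψ : ψ x = (2 : ℝ) • ψ ((2 : ℝ)⁻¹ • x))
    (hw : ∀ t ∈ Icc (2⁻¹ : ℝ) 1, DifferentiableAt ℝ w (t • x))
    (hG : ContinuousOn (fun t : ℝ => radialDerivDivNorm w (t • x)) (Icc 2⁻¹ 1)) :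
    ‖w x - ψ x‖ₑ ^ 2 ≤ 8 * ‖w ((2 : ℝ)⁻¹ • x) - ψ ((2 : ℝ)⁻¹ • x)‖ₑ ^ 2
      + ∫⁻ t in Ioc (2⁻¹ : ℝ) 1, ‖radialDerivDivNorm w (t • x)‖ₑ ^ 2 := by
  set a := ‖w ((2 : ℝ)⁻¹ • x) - ψ ((2 : ℝ)⁻¹ • x)‖ₑ
  set I := ∫⁻ t in Ioc (2⁻¹ : ℝ) 1, ‖radialDerivDivNorm w (t • x)‖ₑ
  set J := ∫⁻ t in Ioc (2⁻¹ : ℝ) 1, ‖radialDerivDivNorm w (t • x)‖ₑ ^ 2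
  have hcs : I ^ 2 ≤ 2⁻¹ * J := by
    convert setLIntegral_sq_le volume (Ioc (2⁻¹ : ℝ) 1)
      ((hG.mono Ioc_subset_Icc_self).enorm.aemeasurable measurableSet_Ioc) using 2
    rw [Real.volume_Ioc, show (1 : ℝ) - 2⁻¹ = 2⁻¹ by norm_num, ENNReal.ofReal_inv_of_pos two_pos,
      ENNReal.ofReal_ofNat]
  have hx₁' : ‖x‖ₑ ^ 2 ≤ 1 :=
    pow_le_one₀ (by positivity) (ofReal_norm x ▸ ENNReal.ofReal_le_one.2 hx₁)
  calc ‖w x - ψ x‖ₑ ^ 2 ≤ (2 * a + ‖x‖ₑ ^ 2 * I) ^ 2 := by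
        gcongr; exact enorm_sub_le_enorm_sub_half_add_lintegral hx hψ hw hG
    _ ≤ (2 * a + I) ^ 2 := by gcongr; exact mul_le_of_le_one_left' hx₁'
    _ ≤ 2 * ((2 * a) ^ 2 + I ^ 2) := ENNReal.add_sq_le _ _
    _ ≤ 2 * ((2 * a) ^ 2 + 2⁻¹ * J) := by gcongr
    _ = 8 * a ^ 2 + J := by
        rw [mul_add, ← mul_assoc, ENNReal.mul_inv_cancel two_ne_zero ENNReal.ofNat_ne_top,
          one_mul, mul_pow]
        norm_num [← mul_assoc]

theorem ContDiffOn.setLIntegral_enorm_radialDerivDivNorm_sq_lt_top [ProperSpace E]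
    [MeasurableSpace E] [BorelSpace E] (μ : Measure E) [IsFiniteMeasureOnCompacts μ] {w : E → F}
    {r ρ : ℝ} (hw : ContDiffOn ℝ 1 w (closedBall 0 r \ {0})) (hr : 0 < r) (hρ : 0 < ρ) :
    ∫⁻ y in ball (0 : E) r \ ball 0 ρ, ‖radialDerivDivNorm w y‖ₑ ^ 2 ∂μ < ∞ := by
  have hs : UniqueDiffOn ℝ (closedBall (0 : E) r \ {0}) := fun x hx => by
    rw [Set.sdiff_eq, uniqueDiffWithinAt_inter (isOpen_compl_singleton.mem_nhds hx.2)]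
    exact uniqueDiffOn_convex (convex_closedBall 0 r)
      ((nonempty_ball.2 hr).mono ball_subset_interior_closedBall) x hx.1
  obtain ⟨M, hM⟩ := hw.exists_bound_radialDerivDivNorm hs (fun h => h.2 rfl)
    ((isCompact_closedBall 0 r).diff isOpen_ball)
    (sdiff_subset_sdiff_right (singleton_subset_iff.2 (mem_ball_self hρ)))
  have hint : ball (0 : E) r \ ball 0 ρ ⊆ interior (closedBall 0 r \ {0}) := fun y hy =>
    interior_maximal (sdiff_subset_sdiff_left ball_subset_closedBall)
      (isOpen_ball.sdiff isClosed_singleton)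
      ⟨hy.1, fun h => hy.2 (by rw [h]; exact mem_ball_self hρ)⟩
  refine setLIntegral_lt_top_of_le_nnreal
    ((measure_mono sdiff_subset).trans_lt measure_ball_lt_top).ne ⟨M.toNNReal ^ 2, fun y hy => ?_⟩
  rw [ENNReal.coe_pow, ← ofReal_norm]
  gcongr
  exact ENNReal.ofReal_le_ofReal (hM y ⟨⟨ball_subset_closedBall hy.1, hy.2⟩, hint hy⟩)

theorem sqNormOn_sub_le_of_mem_annulus [CompleteSpace F] {w ψ : E → F}
    (hw : DifferentiableOn ℝ w (ball 0 (1/2) \ {0}))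
    (hG : ContinuousOn (radialDerivDivNorm w) (ball 0 (1/2) \ {0}))
    (hψ : ∀ t : ℝ, 0 < t → ∀ x, ψ (t • x) = t • ψ x) {x : E}
    (hx : x ∈ ball (0 : E) (1/2) \ ball 0 (1/4)) :
    sqNormOn (ball 0 (1/2) \ {0}) (fun y => w y - ψ y) x
      ≤ 8 * sqNormOn (ball 0 (1/2) \ {0}) (fun y => w y - ψ y) ((2 : ℝ)⁻¹ • x)
        + ∫⁻ t in Ioc (2⁻¹ : ℝ) 1,
            sqNormOn (ball 0 (1/2) \ {0}) (radialDerivDivNorm w) (t • x) := by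
  obtain ⟨hx₂, hx₄⟩ := hx
  rw [mem_ball_zero_iff] at hx₂
  rw [mem_ball_zero_iff, not_lt] at hx₄
  have hx₀ : x ≠ 0 := by rintro rfl; norm_num at hx₄
  have hseg : ∀ t ∈ Icc (2⁻¹ : ℝ) 1, t • x ∈ ball (0 : E) (1/2) \ {0} := fun t ht => by
    refine ⟨?_, smul_ne_zero (by linarith [ht.1]) hx₀⟩
    rw [mem_ball_zero_iff, norm_smul, Real.norm_of_nonneg (by linarith [ht.1])]
    nlinarith [ht.2, norm_nonneg x]
  rw [sqNormOn_of_mem (one_smul ℝ x ▸ hseg 1 ⟨by norm_num, le_rfl⟩),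
    sqNormOn_of_mem (hseg 2⁻¹ ⟨le_rfl, by norm_num⟩),
    setLIntegral_congr_fun measurableSet_Ioc
      fun t ht => sqNormOn_of_mem (hseg t (Ioc_subset_Icc_self ht))]
  exact enorm_sub_sq_le_enorm_sub_half_sq_add_lintegral hx₀ (by linarith)
    (by rw [← hψ 2 two_pos, smul_inv_smul₀ two_ne_zero])
    (fun t ht => hw.differentiableAt ((isOpen_ball.sdiff isClosed_singleton).mem_nhds (hseg t ht)))
    (hG.comp (continuousOn_id.smul continuousOn_const) hseg)

end RadialDerivative

section Scaling

variable {E : Type*} [NormedAddCommGroup E] [NormedSpace ℝ E] [MeasurableSpace E] [BorelSpace E]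
  [FiniteDimensional ℝ E] (μ : Measure E) [μ.IsAddHaarMeasure]

theorem setLIntegral_comp_smul_le {f : E → ℝ≥0∞} (hf : Measurable f) {r : ℝ} (hr : 0 < r)
    {s t : Set E} (ht : MeasurableSet t) (hst : MapsTo (r • ·) s t) :
    ∫⁻ x in s, f (r • x) ∂μ ≤ ENNReal.ofReal (r ^ finrank ℝ E)⁻¹ * ∫⁻ y in t, f y ∂μ := by
  have hft : Measurable (t.indicator f) := hf.indicator ht
  calc ∫⁻ x in s, f (r • x) ∂μ ≤ ∫⁻ x in s, t.indicator f (r • x) ∂μ :=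
        setLIntegral_mono (hft.comp (measurable_const_smul r))
          fun x hx => (indicator_of_mem (hst hx) f).ge
    _ ≤ ∫⁻ x, t.indicator f (r • x) ∂μ := setLIntegral_le_lintegral _ _
    _ = ENNReal.ofReal (r ^ finrank ℝ E)⁻¹ * ∫⁻ y in t, f y ∂μ := by
        rw [← lintegral_map hft (measurable_const_smul r), Measure.map_addHaar_smul μ hr.ne',
          lintegral_smul_measure, smul_eq_mul, abs_of_pos (by positivity),
          lintegral_indicator ht]

theorem lintegral_annulus_comp_half_le {P : E → ℝ≥0∞} (hP : Measurable P) :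
    ∫⁻ x in ball (0 : E) (1/2) \ ball 0 (1/4), P ((2 : ℝ)⁻¹ • x) ∂μ
      ≤ 2 ^ finrank ℝ E * ∫⁻ y in ball (0 : E) (1/4), P y ∂μ := by
  have hmaps : MapsTo ((2 : ℝ)⁻¹ • ·) (ball (0 : E) (1/2) \ ball 0 (1/4)) (ball 0 (1/4)) := by
    intro x hx
    simp only [Set.mem_sdiff, mem_ball_zero_iff, norm_smul] at hx ⊢
    norm_num; linarith [hx.1]
  convert setLIntegral_comp_smul_le μ hP (by norm_num) measurableSet_ball hmaps using 2
  rw [inv_pow, inv_inv, ENNReal.ofReal_pow zero_le_two, ENNReal.ofReal_ofNat]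

theorem lintegral_annulus_lintegral_comp_smul_le {Q : E → ℝ≥0∞} (hQ : Measurable Q) :
    ∫⁻ x in ball (0 : E) (1/2) \ ball 0 (1/4), (∫⁻ t in Ioc (2⁻¹ : ℝ) 1, Q (t • x)) ∂μ
      ≤ 2 ^ finrank ℝ E * ∫⁻ y in ball (0 : E) (1/2) \ ball 0 (1/8), Q y ∂μ := by
  have hinner : ∀ t ∈ Ioc (2⁻¹ : ℝ) 1,
      ∫⁻ x in ball (0 : E) (1/2) \ ball 0 (1/4), Q (t • x) ∂μ
        ≤ 2 ^ finrank ℝ E * ∫⁻ y in ball (0 : E) (1/2) \ ball 0 (1/8), Q y ∂μ := by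
    rintro t ⟨ht₁, ht₂⟩
    have ht : 0 < t := lt_trans (by norm_num) ht₁
    have hmaps : MapsTo (t • ·) (ball (0 : E) (1/2) \ ball 0 (1/4))
        (ball 0 (1/2) \ ball 0 (1/8)) := by
      intro x hx
      simp only [Set.mem_sdiff, mem_ball_zero_iff, norm_smul, Real.norm_of_nonneg ht.le,
        not_lt] at hx ⊢
      constructor <;> nlinarith [norm_nonneg x]
    refine (setLIntegral_comp_smul_le μ hQ ht
      (measurableSet_ball.diff measurableSet_ball) hmaps).trans (mul_le_mul_left ?_ _)
    rw [← ENNReal.ofReal_ofNat, ← ENNReal.ofReal_pow zero_le_two]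
    refine ENNReal.ofReal_le_ofReal ?_
    rw [← inv_pow]
    exact pow_le_pow_left₀ (by positivity) (inv_le_of_inv_le₀ two_pos ht₁.le) _
  have hmeas : Measurable (Function.uncurry fun (x : E) (t : ℝ) => Q (t • x)) :=
    hQ.comp (measurable_snd.smul measurable_fst)
  rw [lintegral_lintegral_swap hmeas.aemeasurable]
  calc ∫⁻ t in Ioc (2⁻¹ : ℝ) 1, ∫⁻ x in ball (0 : E) (1/2) \ ball 0 (1/4), Q (t • x) ∂μ
      ≤ ∫⁻ _ in Ioc (2⁻¹ : ℝ) 1,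
          2 ^ finrank ℝ E * ∫⁻ y in ball (0 : E) (1/2) \ ball 0 (1/8), Q y ∂μ :=
        setLIntegral_mono measurable_const hinner
    _ ≤ 2 ^ finrank ℝ E * ∫⁻ y in ball (0 : E) (1/2) \ ball 0 (1/8), Q y ∂μ := by
        rw [setLIntegral_const, Real.volume_Ioc]
        exact mul_le_of_le_one_right' (ENNReal.ofReal_le_one.2 (by norm_num))

theorem lintegral_ball_le_of_annulus_bound {P Q : E → ℝ≥0∞} (hP : Measurable P)
    (hQ : Measurable Q)
    (h : ∀ x ∈ ball (0 : E) (1/2) \ ball 0 (1/4),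
      P x ≤ 8 * P ((2 : ℝ)⁻¹ • x) + ∫⁻ t in Ioc (2⁻¹ : ℝ) 1, Q (t • x)) :
    ∫⁻ x in ball (0 : E) (1/2), P x ∂μ
      ≤ (1 + 8 * 2 ^ finrank ℝ E) * ∫⁻ x in ball (0 : E) (1/4), P x ∂μ
        + (1 + 8 * 2 ^ finrank ℝ E) * ∫⁻ x in ball (0 : E) (1/2) \ ball 0 (1/8), Q x ∂μ := by
  set c : ℝ≥0∞ := 2 ^ finrank ℝ E
  set I := ∫⁻ x in ball (0 : E) (1/4), P x ∂μ
  set J := ∫⁻ x in ball (0 : E) (1/2) \ ball 0 (1/8), Q x ∂μ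
  have hA : MeasurableSet (ball (0 : E) (1/2) \ ball 0 (1/4)) :=
    measurableSet_ball.diff measurableSet_ball
  have hannulus : ∫⁻ x in ball (0 : E) (1/2) \ ball 0 (1/4), P x ∂μ ≤ 8 * (c * I) + c * J :=
    calc ∫⁻ x in ball (0 : E) (1/2) \ ball 0 (1/4), P x ∂μ
        ≤ ∫⁻ x in ball (0 : E) (1/2) \ ball 0 (1/4),
            (8 * P ((2 : ℝ)⁻¹ • x) + ∫⁻ t in Ioc (2⁻¹ : ℝ) 1, Q (t • x)) ∂μ :=
          setLIntegral_mono' hA h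
      _ = 8 * ∫⁻ x in ball (0 : E) (1/2) \ ball 0 (1/4), P ((2 : ℝ)⁻¹ • x) ∂μ
            + ∫⁻ x in ball (0 : E) (1/2) \ ball 0 (1/4),
                (∫⁻ t in Ioc (2⁻¹ : ℝ) 1, Q (t • x)) ∂μ := by
          have hP2 : Measurable fun x : E => P ((2 : ℝ)⁻¹ • x) :=
            hP.comp (measurable_const_smul _)
          rw [lintegral_add_left (hP2.const_mul 8), lintegral_const_mul 8 hP2]
      _ ≤ 8 * (c * I) + c * J := by
          gcongr
          · exact lintegral_annulus_comp_half_le μ hP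
          · exact lintegral_annulus_lintegral_comp_smul_le μ hQ
  calc ∫⁻ x in ball (0 : E) (1/2), P x ∂μ
      = I + ∫⁻ x in ball (0 : E) (1/2) \ ball 0 (1/4), P x ∂μ := by
        rw [← lintegral_union hA disjoint_sdiff_right,
          union_sdiff_cancel (ball_subset_ball (by norm_num))]
    _ ≤ I + (8 * (c * I) + c * J) := by gcongr
    _ = (1 + 8 * c) * I + c * J := by ring
    _ ≤ (1 + 8 * c) * I + (1 + 8 * c) * J := by
        gcongr
        exact le_add_left (le_mul_of_one_le_left' (by norm_num))

end Scaling

/-- There is `C = C(n)` such that for every `C¹` function `w` on the punctured closed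
half-ball `B̄_{1/2}(0) \ {0}` and every continuous positively 1-homogeneous `ψ`,
`∫_{B_{1/2}} |w − ψ|² ≤ C ∫_{B_{1/4}} |w − ψ|² + C ∫_{B_{1/2} \ B_{1/8}} |∂_R(w/R)|²`,
where `∂_R(w/R)(x) = (d/dt)|_{t=|x|} (w(t x/|x|)/t)`. -/
theorem stmt_12 (n : ℕ) (hn : 1 ≤ n) :
    ∃ C : ℝ, 0 < C ∧
      ∀ (m : ℕ) (w ψ : EuclideanSpace ℝ (Fin n) → EuclideanSpace ℝ (Fin m)),
        ContDiffOn ℝ 1 w (closedBall 0 (1/2) \ {0}) →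
        Continuous ψ →
        (∀ t : ℝ, 0 < t → ∀ x, ψ (t • x) = t • ψ x) →
        (∫ x in ball (0 : EuclideanSpace ℝ (Fin n)) (1/2), ‖w x - ψ x‖ ^ 2) ≤
          C * (∫ x in ball (0 : EuclideanSpace ℝ (Fin n)) (1/4), ‖w x - ψ x‖ ^ 2) +
          C * ∫ x in ball (0 : EuclideanSpace ℝ (Fin n)) (1/2) \ ball 0 (1/8),
            norm (deriv (fun t : ℝ => t⁻¹ • w (t • (‖x‖⁻¹ • x))) ‖x‖) ^ 2 := by
  have : Nonempty (Fin n) := ⟨⟨0, hn⟩⟩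
  refine ⟨1 + 8 * 2 ^ n, by positivity, fun m w ψ hw hψc hψ => ?_⟩
  set U := ball (0 : EuclideanSpace ℝ (Fin n)) (1/2) \ {0}
  have hU : IsOpen U := isOpen_ball.sdiff isClosed_singleton
  have hwU : ContDiffOn ℝ 1 w U := hw.mono (sdiff_subset_sdiff_left ball_subset_closedBall)
  have hwd : DifferentiableOn ℝ w U := hwU.differentiableOn one_ne_zero
  have hG := hwU.continuousOn_radialDerivDivNorm hU fun h => h.2 rfl
  have hwψ : ContinuousOn (fun y => w y - ψ y) U := hwU.continuousOn.sub hψc.continuousOn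
  have hannulus : ball (0 : EuclideanSpace ℝ (Fin n)) (1/2) \ ball 0 (1/8) ⊆ U := fun x hx =>
    ⟨hx.1, fun h => hx.2 (by rw [h]; exact mem_ball_self (by norm_num))⟩
  have hball : ∀ r ≤ (1/2 : ℝ), ∀ᵐ x ∂volume, x ∈ ball 0 r → x ∈ U := fun r hr => by
    filter_upwards [Measure.ae_ne volume 0] with x hx₀ hx using ⟨ball_subset_ball hr hx, hx₀⟩
  have hmain := lintegral_ball_le_of_annulus_bound volume
    (hwψ.measurable_sqNormOn hU.measurableSet) (hG.measurable_sqNormOn hU.measurableSet)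
    fun _ hx => sqNormOn_sub_le_of_mem_annulus hwd hG hψ hx
  rw [finrank_euclideanSpace_fin] at hmain
  have hG_fin : ∫⁻ x in ball (0 : EuclideanSpace ℝ (Fin n)) (1/2) \ ball 0 (1/8),
      sqNormOn U (radialDerivDivNorm w) x < ∞ :=
    (lintegral_mono (sqNormOn_le U _)).trans_lt
      (hw.setLIntegral_enorm_radialDerivDivNorm_sq_lt_top volume (by norm_num) (by norm_num))
  have hderiv : ∀ x ∈ ball (0 : EuclideanSpace ℝ (Fin n)) (1/2) \ ball 0 (1/8),
      ‖deriv (fun t : ℝ => t⁻¹ • w (t • (‖x‖⁻¹ • x))) ‖x‖‖ ^ 2 = ‖radialDerivDivNorm w x‖ ^ 2 :=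
    fun x hx => by rw [deriv_inv_smul_comp_smul_inv_norm
      (hwd.differentiableAt (hU.mem_nhds (hannulus hx))) (hannulus hx).2]
  rw [setIntegral_congr_fun (measurableSet_ball.diff measurableSet_ball) hderiv,
    hwψ.setIntegral_norm_sq_eq_toReal measurableSet_ball hU.measurableSet (hball _ le_rfl),
    hwψ.setIntegral_norm_sq_eq_toReal measurableSet_ball hU.measurableSet (hball _ (by norm_num)),
    hG.setIntegral_norm_sq_eq_toReal (measurableSet_ball.diff measurableSet_ball)
      hU.measurableSet (ae_of_all _ hannulus)]
  convert ENNReal.toReal_le_mul_add_mul (by finiteness) hG_fin.ne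
    (lintegral_mono_set (ball_subset_ball (by norm_num))) hmain
  all_goals norm_cast
end
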